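/- In the real quaternions, α̲β̲ + β̲α̲ = 2(Q_L(0) − [q]), i.e. the sum of the two products of α̲ and β̲ equals 2((L(0) + L(1)i + L(2)j + L(3)k) − (1 − q + q² − q³)). -/

import Mathlib

/-!
Vieta gives `α + β = p` and `αβ = -q`, so by Binet `L n = αⁿ + βⁿ`. In `ab + ba` the cross
products cancel: for `a = 1 + u`, `b = 1 + v` with `u, v` pure, `ab + ba = 2(1 - u·v) + 2(u + v)`.
For `α̲, β̲` the dot product is `αβ + (αβ)² + (αβ)³ = -q + q² - q³`, and the coordinates of
`u + v` are `αⁿ + βⁿ = L n`.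
-/

open Quaternion

namespace Quaternion

variable {R : Type*} [CommRing R]

theorem coe_add_coe_mul_basis (a b c d : R) :
    (a : ℍ[R]) + (b : ℍ[R]) * ⟨0, 1, 0, 0⟩ + (c : ℍ[R]) * ⟨0, 0, 1, 0⟩
      + (d : ℍ[R]) * ⟨0, 0, 0, 1⟩ = ⟨a, b, c, d⟩ := by
  -- the literals `⟨…⟩` live in `QuaternionAlgebra R (-1) 0 (-1)`, where its simp lemmas apply
  change (a : ℍ[R,-1,0,-1]) + (b : ℍ[R,-1,0,-1]) * ⟨0, 1, 0, 0⟩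
    + (c : ℍ[R,-1,0,-1]) * ⟨0, 0, 1, 0⟩ + (d : ℍ[R,-1,0,-1]) * ⟨0, 0, 0, 1⟩ = ⟨a, b, c, d⟩
  ext <;> simp

theorem mul_add_mul_swap (a b : ℍ[R]) :
    a * b + b * a =
      ⟨2 * (a.re * b.re - a.imI * b.imI - a.imJ * b.imJ - a.imK * b.imK),
        2 * (a.re * b.imI + b.re * a.imI), 2 * (a.re * b.imJ + b.re * a.imJ),
        2 * (a.re * b.imK + b.re * a.imK)⟩ := by
  ext <;> simp only [re_add, imI_add, imJ_add, imK_add, re_mul, imI_mul, imJ_mul, imK_mul] <;>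
    ring

end Quaternion

theorem add_sqrt_div_two_mul_sub_sqrt_div_two {p q : ℝ} (h : 0 ≤ p ^ 2 + 4 * q) :
    (p + √(p ^ 2 + 4 * q)) / 2 * ((p - √(p ^ 2 + 4 * q)) / 2) = -q := by
  linear_combination (-1 / 4 : ℝ) * Real.sq_sqrt h

theorem lucas_eq_pow_add_pow {R : Type*} [CommRing R] {p q α β : R} (hsum : α + β = p)
    (hprod : α * β = -q) {L : ℤ → R} (hL0 : L 0 = 2) (hL1 : L 1 = p)
    (hL : ∀ n : ℤ, L (n + 2) = p * L (n + 1) + q * L n) (n : ℕ) :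
    L n = α ^ n + β ^ n := by
  induction n using Nat.twoStepInduction with
  | zero => simp [hL0, one_add_one_eq_two]
  | one => simp [hL1, hsum]
  | more n ih₀ ih₁ =>
    push_cast at ih₁ ⊢
    rw [hL, ih₀, ih₁, ← hsum]
    linear_combination (α ^ n + β ^ n) * hprod

theorem stmt_2 (p q : ℝ) (hpq : 0 < p^2 + 4*q)
    (α β : ℝ)
    (hα : α = (p + Real.sqrt (p^2 + 4*q)) / 2)
    (hβ : β = (p - Real.sqrt (p^2 + 4*q)) / 2)
    (L : ℤ → ℝ) (hL0 : L 0 = 2) (hL1 : L 1 = p)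
    (hL : ∀ n : ℤ, L (n+2) = p * L (n+1) + q * L n)
    (i j k : ℍ[ℝ])
    (hi : i = ⟨0,1,0,0⟩) (hj : j = ⟨0,0,1,0⟩) (hk : k = ⟨0,0,0,1⟩)
    (QL : ℤ → ℍ[ℝ])
    (hQL : ∀ n : ℤ, QL n = ((L n : ℝ) : ℍ[ℝ]) + ((L (n+1) : ℝ) : ℍ[ℝ]) * i
      + ((L (n+2) : ℝ) : ℍ[ℝ]) * j + ((L (n+3) : ℝ) : ℍ[ℝ]) * k)
    (uα : ℍ[ℝ])
    (huα : uα = 1 + ((α : ℝ) : ℍ[ℝ]) * i + ((α^2 : ℝ) : ℍ[ℝ]) * j + ((α^3 : ℝ) : ℍ[ℝ]) * k)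
    (uβ : ℍ[ℝ])
    (huβ : uβ = 1 + ((β : ℝ) : ℍ[ℝ]) * i + ((β^2 : ℝ) : ℍ[ℝ]) * j + ((β^3 : ℝ) : ℍ[ℝ]) * k) :
    uα * uβ + uβ * uα = 2 * (QL 0 - ((1 - q + q^2 - q^3 : ℝ) : ℍ[ℝ])) := by
  have hsum : α + β = p := by rw [hα, hβ]; ring
  have hprod : α * β = -q := by rw [hα, hβ]; exact add_sqrt_div_two_mul_sub_sqrt_div_two hpq.le
  have hL2 : L 2 = α ^ 2 + β ^ 2 := by exact_mod_cast lucas_eq_pow_add_pow hsum hprod hL0 hL1 hL 2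
  have hL3 : L 3 = α ^ 3 + β ^ 3 := by exact_mod_cast lucas_eq_pow_add_pow hsum hprod hL0 hL1 hL 3
  obtain rfl : q = -(α * β) := by linarith
  subst hsum hi hj hk
  rw [← coe_one, coe_add_coe_mul_basis] at huα huβ
  have hQL0 := (hQL 0).trans (coe_add_coe_mul_basis ..)
  rw [two_mul, mul_add_mul_swap]
  -- `⟨…⟩` elaborates in `QuaternionAlgebra ℝ (-1) 0 (-1)`, not in `ℍ[ℝ]`, so the `ℍ[ℝ]` simp lemmas
  -- must be applied before `QL 0` is unfolded.
  ext <;> simp only [re_add, imI_add, imJ_add, imK_add, re_sub, imI_sub, imJ_sub, imK_sub,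
    re_coe, imI_coe, imJ_coe, imK_coe] <;> simp only [huα, huβ, hQL0, zero_add, hL0, hL1, hL2, hL3]
    <;> ring
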